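/- arXiv:1901.00355 — 2 statements merged into one kernel-verified Lean document; each statement's English description precedes it below -/
import Mathlib

section
/- Let m > 3 be odd and n even, and let G(i) ⊆ G_{m,n} be the subgraph induced by the stars S_{m(i)} and S_{m(i+n/2)}. There exists an assignment of labels to the 2m vertices of G(i), satisfying the radio labeling condition |f(u) − f(v)| ≥ n + 2 − d(u,v) (distances in G_{m,n}) for all distinct pairs in G(i), whose span is at most mn − n/2 + 2. -/
/-- The star graph on `m` vertices with center `0`. -/
def starGraph (m : ℕ) : SimpleGraph (Fin m) :=
  SimpleGraph.fromRel (fun a _ => (a : ℕ) = 0)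

/-- The path graph on `n` vertices `0, 1, …, n-1`. -/
def pathGraph' (n : ℕ) : SimpleGraph (Fin n) :=
  SimpleGraph.fromRel (fun a b => (a : ℕ) + 1 = b)

/-- The stacked-book graph `G_{m,n} = S_m □ P_n`. -/
def bookGraph (m n : ℕ) : SimpleGraph (Fin m × Fin n) :=
  (starGraph m).boxProd (pathGraph' n)

/-- `f` is a radio labeling of `G` for diameter `D`:
`|f u - f v| ≥ D + 1 - d(u,v)` for all distinct `u, v`. -/
def IsRadioLabeling {V : Type*} (G : SimpleGraph V) (D : ℕ) (f : V → ℕ) : Prop :=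
  ∀ u v : V, u ≠ v → (D : ℤ) + 1 - G.dist u v ≤ |(f u : ℤ) - (f v : ℤ)|

/-- The span of a labeling: maximum label minus minimum label. -/
noncomputable def span {V : Type*} (f : V → ℕ) : ℕ :=
  sSup (Set.range f) - sInf (Set.range f)

/-- The radio number of the stacked-book graph `G_{m,n}` (whose diameter is `n+1`). -/
noncomputable def rnBook (m n : ℕ) : ℕ :=
  sInf {s | ∃ f : Fin m × Fin n → ℕ, IsRadioLabeling (bookGraph m n) (n + 1) f ∧ span f = s}

/-!
Write `h = n / 2`. The columns `i` and `i + h` are `h` apart in the path, so two vertices of `G(i)`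
at star distance `d ≤ 2` need labels `2h + 2 - d` apart if they lie in the same column and
`h + 2 - d` apart otherwise. Every label has the form `s * h + o` with an offset `o ≤ 2` and slots
`s ∈ [0, 2m - 1]` assigned as follows: slot `0` to the centre of column `i`, the even slots to the
leaves of column `i`, the odd slots to the leaves of column `i + h`, and slot `2m - 1` (with
offset `2`) to the centre of column `i + h`. Vertices of one column are then at least two slots
apart, and vertices of different columns are one slot apart only when they are distinct leaves,
at distance `h + 2`. The largest label is `(2m - 1)h + 2 = mn - n/2 + 2`.
-/

namespace SimpleGraph

theorem dist_boxProd_of_preconnected {α β : Type*} {G : SimpleGraph α}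
    {H : SimpleGraph β} (hG : G.Preconnected) (hH : H.Preconnected) (x y : α × β) :
    (G □ H).dist x y = G.dist x.1 y.1 + H.dist x.2 y.2 := by
  have hxy : (G □ H).Reachable x y := reachable_boxProd.2 ⟨hG x.1 y.1, hH x.2 y.2⟩
  have h := hxy.coe_dist_eq_edist
  rw [edist_boxProd, ← (hG x.1 y.1).coe_dist_eq_edist, ← (hH x.2 y.2).coe_dist_eq_edist] at h
  exact_mod_cast h

theorem Walk.abs_sub_le_length_pathGraph {n : ℕ} {u v : Fin n}
    (p : (pathGraph n).Walk u v) : |(u : ℤ) - v| ≤ p.length := by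
  induction p with
  | nil => simp
  | @cons u w v hadj q ih =>
    have hstep : |(u : ℤ) - w| = 1 := by
      rcases pathGraph_adj.1 hadj with h | h <;> rw [abs_eq (by norm_num)] <;> omega
    calc |(u : ℤ) - v| ≤ |(u : ℤ) - w| + |(w : ℤ) - v| := abs_sub_le _ _ _
      _ ≤ (q.cons hadj).length := by rw [Walk.length_cons, hstep]; push_cast; linarith

theorem abs_sub_le_dist_pathGraph {n : ℕ} (u v : Fin n) :
    |(u : ℤ) - v| ≤ (pathGraph n).dist u v := by
  obtain ⟨p, hp⟩ := (pathGraph_preconnected n u v).exists_walk_length_eq_dist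
  exact hp ▸ p.abs_sub_le_length_pathGraph

end SimpleGraph

theorem pathGraph'_eq_pathGraph (n : ℕ) : pathGraph' n = SimpleGraph.pathGraph n := by
  ext u v
  simp only [pathGraph', SimpleGraph.fromRel_adj, SimpleGraph.pathGraph_adj, ne_eq, Fin.ext_iff]
  omega

section Star

variable {m : ℕ}

theorem starGraph_adj {a b : Fin m} :
    (starGraph m).Adj a b ↔ a ≠ b ∧ ((a : ℕ) = 0 ∨ (b : ℕ) = 0) := by
  simp [starGraph]

theorem starGraph_preconnected (m : ℕ) : (starGraph m).Preconnected := by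
  intro a b
  let center : Fin m := ⟨0, a.pos⟩
  have to_center (x : Fin m) : (starGraph m).Reachable x center := by
    by_cases hx : x = center
    · rw [hx]
    · exact (starGraph_adj.2 ⟨hx, Or.inr rfl⟩).reachable
  exact (to_center a).trans (to_center b).symm

theorem one_le_dist_starGraph {a c : Fin m} (hac : a ≠ c) : 1 ≤ (starGraph m).dist a c :=
  (starGraph_preconnected m a c).pos_dist_of_ne hac

theorem two_le_dist_starGraph {a c : Fin m} (hac : a ≠ c) (ha : (a : ℕ) ≠ 0)
    (hc : (c : ℕ) ≠ 0) : 2 ≤ (starGraph m).dist a c :=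
  (starGraph_preconnected m a c).one_lt_dist_of_ne_of_not_adj hac (by simp [starGraph_adj, ha, hc])

end Star

theorem bookGraph_dist {m n : ℕ} (u v : Fin m × Fin n) :
    (bookGraph m n).dist u v = (starGraph m).dist u.1 v.1 + (pathGraph' n).dist u.2 v.2 :=
  SimpleGraph.dist_boxProd_of_preconnected (starGraph_preconnected m)
    (pathGraph'_eq_pathGraph n ▸ SimpleGraph.pathGraph_preconnected n) u v

/-- A cyclic shift by two of the leaves `1, …, m - 1`. Leaf `k` of column `i` gets the slot
`2 * leafSlot m k` and its copy in column `i + n / 2` the slot `2 * k - 1`; once `m > 3` these are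
never adjacent. -/
def leafSlot (m k : ℕ) : ℕ := if k ≤ 2 then k + m - 3 else k - 2

section LeafSlot

variable {m : ℕ}

theorem leafSlot_mapsTo (hm : 3 ≤ m) : Set.MapsTo (leafSlot m) (Set.Ico 1 m) (Set.Ico 1 m) := by
  intro k ⟨hk, hkm⟩
  unfold leafSlot
  constructor <;> split_ifs <;> omega

theorem leafSlot_injOn : Set.InjOn (leafSlot m) (Set.Ico 1 m) := by
  intro k ⟨hk, hkm⟩ c ⟨hc, hcm⟩ h
  unfold leafSlot at h
  split_ifs at h <;> omega

theorem leafSlot_far (hm : 3 < m) (k : ℕ) :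
    leafSlot m k + 2 ≤ k ∨ k + 1 ≤ leafSlot m k := by
  unfold leafSlot
  split_ifs <;> omega

end LeafSlot

theorem le_abs_sub_of_slot_add_le {h x x' s s' o o' k : ℕ} (hx : x = s * h + o)
    (hx' : x' = s' * h + o') (hs : s' + k ≤ s) : (k * h : ℤ) + o - o' ≤ |(x : ℤ) - x'| := by
  have : (s' * h + k * h : ℤ) ≤ s * h := by
    exact_mod_cast add_mul s' k h ▸ Nat.mul_le_mul_right h hs
  subst hx hx'
  push_cast
  linarith [le_abs_self ((s * h + o : ℤ) - (s' * h + o'))]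

section Labels

variable {m : ℕ} (h : ℕ)

/-- The labels of column `i`; `farLabel` labels column `i + h`. -/
def nearLabel (a : Fin m) : ℕ := if (a : ℕ) = 0 then 0 else 2 * leafSlot m a * h + 1

def farLabel (a : Fin m) : ℕ := if (a : ℕ) = 0 then (2 * m - 1) * h + 2 else (2 * a - 1) * h + 1

variable {h}

theorem nearLabel_center {a : Fin m} (ha : (a : ℕ) = 0) : nearLabel h a = 0 * h + 0 := by
  simp [nearLabel, ha]

theorem nearLabel_leaf {a : Fin m} (ha : (a : ℕ) ≠ 0) :
    nearLabel h a = 2 * leafSlot m a * h + 1 := by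
  simp [nearLabel, ha]

theorem farLabel_center {a : Fin m} (ha : (a : ℕ) = 0) : farLabel h a = (2 * m - 1) * h + 2 := by
  simp [farLabel, ha]

theorem farLabel_leaf {a : Fin m} (ha : (a : ℕ) ≠ 0) : farLabel h a = (2 * a - 1) * h + 1 := by
  simp [farLabel, ha]

theorem nearLabel_gap (hm : 3 ≤ m) {a c : Fin m} (hac : a ≠ c) :
    (2 * h + 2 : ℤ) ≤ (starGraph m).dist a c + |(nearLabel h a : ℤ) - nearLabel h c| := by
  have hd := one_le_dist_starGraph hac
  have hac' : (a : ℕ) ≠ c := Fin.val_ne_of_ne hac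
  rcases eq_or_ne (a : ℕ) 0 with ha | ha <;> rcases eq_or_ne (c : ℕ) 0 with hc | hc
  · omega
  · obtain ⟨hslot, -⟩ := leafSlot_mapsTo hm ⟨Nat.pos_of_ne_zero hc, c.isLt⟩
    have := le_abs_sub_of_slot_add_le (nearLabel_leaf (h := h) hc) (nearLabel_center ha)
      (k := 2) (by omega)
    rw [abs_sub_comm]; push_cast at *; linarith
  · obtain ⟨hslot, -⟩ := leafSlot_mapsTo hm ⟨Nat.pos_of_ne_zero ha, a.isLt⟩
    have := le_abs_sub_of_slot_add_le (nearLabel_leaf (h := h) ha) (nearLabel_center hc)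
      (k := 2) (by omega)
    push_cast at *; linarith
  · have hd2 := two_le_dist_starGraph hac ha hc
    have hne : leafSlot m a ≠ leafSlot m c := fun e =>
      hac' <| leafSlot_injOn ⟨Nat.pos_of_ne_zero ha, a.isLt⟩
        ⟨Nat.pos_of_ne_zero hc, c.isLt⟩ e
    rcases lt_or_gt_of_ne hne with hlt | hlt
    · have := le_abs_sub_of_slot_add_le (nearLabel_leaf (h := h) hc) (nearLabel_leaf ha)
        (k := 2) (by omega)
      rw [abs_sub_comm]; push_cast at *; linarith
    · have := le_abs_sub_of_slot_add_le (nearLabel_leaf (h := h) ha) (nearLabel_leaf hc)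
        (k := 2) (by omega)
      push_cast at *; linarith

theorem farLabel_gap {a c : Fin m} (hac : a ≠ c) :
    (2 * h + 2 : ℤ) ≤ (starGraph m).dist a c + |(farLabel h a : ℤ) - farLabel h c| := by
  have hd := one_le_dist_starGraph hac
  have hac' : (a : ℕ) ≠ c := Fin.val_ne_of_ne hac
  have := a.isLt
  have := c.isLt
  rcases eq_or_ne (a : ℕ) 0 with ha | ha <;> rcases eq_or_ne (c : ℕ) 0 with hc | hc
  · omega
  · have := le_abs_sub_of_slot_add_le (farLabel_center (h := h) ha) (farLabel_leaf hc)
      (k := 2) (by omega)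
    push_cast at *; linarith
  · have := le_abs_sub_of_slot_add_le (farLabel_center (h := h) hc) (farLabel_leaf ha)
      (k := 2) (by omega)
    rw [abs_sub_comm]; push_cast at *; linarith
  · have hd2 := two_le_dist_starGraph hac ha hc
    rcases lt_or_gt_of_ne hac' with hlt | hlt
    · have := le_abs_sub_of_slot_add_le (farLabel_leaf (h := h) hc) (farLabel_leaf ha)
        (k := 2) (by omega)
      rw [abs_sub_comm]; push_cast at *; linarith
    · have := le_abs_sub_of_slot_add_le (farLabel_leaf (h := h) ha) (farLabel_leaf hc)
        (k := 2) (by omega)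
      push_cast at *; linarith

theorem nearLabel_farLabel_gap (hm : 3 < m) (hh : 1 ≤ h) (a c : Fin m) :
    (h + 2 : ℤ) ≤ (starGraph m).dist a c + |(nearLabel h a : ℤ) - farLabel h c| := by
  have := c.isLt
  rcases eq_or_ne (a : ℕ) 0 with ha | ha <;> rcases eq_or_ne (c : ℕ) 0 with hc | hc
  · have := le_abs_sub_of_slot_add_le (farLabel_center (h := h) hc) (nearLabel_center ha)
      (k := 1) (by omega)
    rw [abs_sub_comm]; push_cast at *; linarith
  · have hd := one_le_dist_starGraph (a := a) (c := c) (fun e => hc (e ▸ ha))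
    have := le_abs_sub_of_slot_add_le (farLabel_leaf (h := h) hc) (nearLabel_center ha)
      (k := 1) (by omega)
    rw [abs_sub_comm]; push_cast at *; linarith
  · have hd := one_le_dist_starGraph (a := a) (c := c) (fun e => ha (e ▸ hc))
    obtain ⟨-, hslot⟩ := leafSlot_mapsTo hm.le ⟨Nat.pos_of_ne_zero ha, a.isLt⟩
    have := le_abs_sub_of_slot_add_le (farLabel_center (h := h) hc) (nearLabel_leaf ha)
      (k := 1) (by omega)
    rw [abs_sub_comm]; push_cast at *; linarith
  · rcases eq_or_ne a c with rfl | hac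
    · rcases leafSlot_far hm a with hfar | hfar
      · have := le_abs_sub_of_slot_add_le (farLabel_leaf (h := h) hc) (nearLabel_leaf ha)
          (k := 3) (by omega)
        rw [abs_sub_comm]; push_cast at *; linarith
      · have := le_abs_sub_of_slot_add_le (nearLabel_leaf (h := h) ha) (farLabel_leaf hc)
          (k := 3) (by omega)
        push_cast at *; linarith
    · have hd2 := two_le_dist_starGraph hac ha hc
      rcases le_or_gt (leafSlot m a) (c - 1) with hlt | hlt
      · have := le_abs_sub_of_slot_add_le (farLabel_leaf (h := h) hc) (nearLabel_leaf ha)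
          (k := 1) (by omega)
        rw [abs_sub_comm]; push_cast at *; linarith
      · have := le_abs_sub_of_slot_add_le (nearLabel_leaf (h := h) ha) (farLabel_leaf hc)
          (k := 1) (by omega)
        push_cast at *; linarith

theorem nearLabel_le (hm : 3 ≤ m) (a : Fin m) : nearLabel h a ≤ (2 * m - 1) * h + 2 := by
  rcases eq_or_ne (a : ℕ) 0 with ha | ha
  · simp [nearLabel, ha]
  · obtain ⟨-, hslot⟩ := leafSlot_mapsTo hm ⟨Nat.pos_of_ne_zero ha, a.isLt⟩
    rw [nearLabel_leaf ha]
    have := Nat.mul_le_mul_right h (show 2 * leafSlot m a ≤ 2 * m - 1 by omega)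
    omega

theorem farLabel_le (a : Fin m) : farLabel h a ≤ (2 * m - 1) * h + 2 := by
  rcases eq_or_ne (a : ℕ) 0 with ha | ha
  · simp [farLabel, ha]
  · have := a.isLt
    rw [farLabel_leaf ha]
    have := Nat.mul_le_mul_right h (show 2 * (a : ℕ) - 1 ≤ 2 * m - 1 by omega)
    omega

end Labels

theorem bookGraph_radio_gap_of_two_columns {m n h i : ℕ} (hn : n = 2 * h) {g₀ g₁ : Fin m → ℕ}
    (h₀ : ∀ a c, a ≠ c →
      (2 * h + 2 : ℤ) ≤ (starGraph m).dist a c + |(g₀ a : ℤ) - g₀ c|)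
    (h₁ : ∀ a c, a ≠ c →
      (2 * h + 2 : ℤ) ≤ (starGraph m).dist a c + |(g₁ a : ℤ) - g₁ c|)
    (h₀₁ : ∀ a c, (h + 2 : ℤ) ≤ (starGraph m).dist a c + |(g₀ a : ℤ) - g₁ c|)
    {u v : Fin m × Fin n} (hu : (u.2 : ℕ) = i ∨ (u.2 : ℕ) = i + h)
    (hv : (v.2 : ℕ) = i ∨ (v.2 : ℕ) = i + h) (huv : u ≠ v) :
    let f : Fin m × Fin n → ℕ := fun p => if (p.2 : ℕ) = i then g₀ p.1 else g₁ p.1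
    (n : ℤ) + 2 - (bookGraph m n).dist u v ≤ |(f u : ℤ) - f v| := by
  obtain ⟨a, b⟩ := u
  obtain ⟨c, d⟩ := v
  intro f
  have hpath := SimpleGraph.abs_sub_le_dist_pathGraph b d
  rw [bookGraph_dist, pathGraph'_eq_pathGraph]
  dsimp only [f] at hu hv ⊢
  subst hn
  by_cases hb : (b : ℕ) = i <;> by_cases hd : (d : ℕ) = i <;>
    simp only [hb, hd, if_true, if_false]
  · have hbd : b = d := Fin.ext (hb.trans hd.symm)
    subst hbd
    have := h₀ a c (fun e => huv (e ▸ rfl))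
    simp only [SimpleGraph.dist_self]; push_cast; linarith
  · have := h₀₁ a c
    have : (b : ℤ) - d = -h := by omega
    rw [this, abs_neg, abs_of_nonneg (by positivity)] at hpath
    push_cast; linarith
  · have := h₀₁ c a
    have : (b : ℤ) - d = h := by omega
    rw [this, abs_of_nonneg (by positivity)] at hpath
    rw [abs_sub_comm, SimpleGraph.dist_comm (G := starGraph m)]; push_cast; linarith
  · have hbd : b = d := Fin.ext (by omega)
    subst hbd
    have := h₁ a c (fun e => huv (e ▸ rfl))
    simp only [SimpleGraph.dist_self]; push_cast; linarith

theorem Gi_upper_bound_m_odd_general (m n : ℕ) (hm : 3 < m) (hn : n % 2 = 0)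
    (i : ℕ) :
    ∃ f : Fin m × Fin n → ℕ,
      let S : Finset (Fin m × Fin n) :=
        Finset.univ.filter (fun p => (p.2 : ℕ) = i ∨ (p.2 : ℕ) = i + n / 2)
      (∀ u ∈ S, ∀ v ∈ S, u ≠ v →
        (n : ℤ) + 2 - (bookGraph m n).dist u v ≤ |(f u : ℤ) - (f v : ℤ)|) ∧
      sSup (f '' ↑S) - sInf (f '' ↑S) ≤ m * n - n / 2 + 2 := by
  refine ⟨fun p => if (p.2 : ℕ) = i then nearLabel (n / 2) p.1 else farLabel (n / 2) p.1,
    ?_, ?_⟩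
  · intro u hu v hv huv
    simp only [Finset.mem_filter, Finset.mem_univ, true_and] at hu hv
    have hh : 1 ≤ n / 2 := by have := u.2.pos; omega
    exact bookGraph_radio_gap_of_two_columns (by omega) (fun _ _ => nearLabel_gap hm.le)
      (fun _ _ => farLabel_gap) (nearLabel_farLabel_gap hm hh) hu hv huv
  · have hmax : (2 * m - 1) * (n / 2) + 2 = m * n - n / 2 + 2 := by
      have e : m * n = 2 * m * (n / 2) := by
        rw [mul_comm 2 m, mul_assoc, Nat.mul_div_cancel' (Nat.dvd_of_mod_eq_zero hn)]
      rw [Nat.sub_mul, one_mul, e]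
    refine (Nat.sub_le _ _).trans (csSup_le' ?_)
    rintro _ ⟨p, -, rfl⟩
    dsimp only
    split_ifs
    · exact hmax ▸ nearLabel_le hm.le p.1
    · exact hmax ▸ farLabel_le p.1

theorem Gi_upper_bound_m_odd (m n : ℕ) (hm : 3 < m) (hmo : Odd m) (hn : n % 2 = 0)
    (i : ℕ) (hi : i < n / 2) :
    ∃ f : Fin m × Fin n → ℕ,
      let S : Finset (Fin m × Fin n) :=
        Finset.univ.filter (fun p => (p.2 : ℕ) = i ∨ (p.2 : ℕ) = i + n / 2)
      (∀ u ∈ S, ∀ v ∈ S, u ≠ v →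
        (n : ℤ) + 2 - (bookGraph m n).dist u v ≤ |(f u : ℤ) - (f v : ℤ)|) ∧
      sSup (f '' ↑S) - sInf (f '' ↑S) ≤ m * n - n / 2 + 2 :=
  Gi_upper_bound_m_odd_general m n hm hn i
end

section
/- Let n be even and G(i) ⊆ G_{3,n} be the subgraph induced by the stars S_{3(i)} and S_{3(i+n/2)}. There exists an assignment of labels to the 6 vertices of G(i) satisfying the radio labeling condition |f(u) − f(v)| ≥ n + 2 − d(u,v) (distances in G_{3,n}) for all distinct pairs, whose span is at most 5n/2 + 3. -/
/-!
Distances in a box product add up, so the distance in `G_{3,n}` between `(k, a)` and `(t, b)` is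
the star distance between `k` and `t` (0, 1, or 2 for two distinct leaves) plus at least `|a - b|`.
With `m = n / 2`, visit the six vertices of `G(i)` alternating between the two rows:
`(0, i), (1, i + m), (2, i), (0, i + m), (1, i), (2, i + m)`, where `0` is the center.
Consecutive vertices are at distance `m + 1` or `m + 2`, so the labels `0, m + 1, 2m + 1, 3m + 2,
4m + 3, 5m + 3` meet the radio condition `n + 2 - d` with equality; vertices that are not
consecutive get labels at least `2m + 1 = n + 1` apart, which suffices as their distance is
positive.
-/

namespace SimpleGraph

variable {V W : Type*} {G : SimpleGraph V} {H : SimpleGraph W}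

lemma Reachable.dist_boxProd {x y : V × W} (hG : G.Reachable x.1 y.1)
    (hH : H.Reachable x.2 y.2) : (G □ H).dist x y = G.dist x.1 y.1 + H.dist x.2 y.2 := by
  have h : (G □ H).Reachable x y := reachable_boxProd.2 ⟨hG, hH⟩
  apply Nat.cast_injective (R := ℕ∞)
  push_cast
  rw [h.coe_dist_eq_edist, hG.coe_dist_eq_edist, hH.coe_dist_eq_edist, edist_boxProd]

lemma Walk.abs_sub_le_length (f : V → ℤ) (hf : ∀ a b, G.Adj a b → |f a - f b| ≤ 1) {u v : V}
    (p : G.Walk u v) : |f u - f v| ≤ p.length := by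
  induction p with
  | nil => simp
  | @cons a b c hab p ih =>
    rw [length_cons, Nat.cast_succ]
    linarith [abs_sub_le (f a) (f b) (f c), hf a b hab]

lemma Reachable.abs_sub_le_dist (f : V → ℤ) (hf : ∀ a b, G.Adj a b → |f a - f b| ≤ 1)
    {u v : V} (h : G.Reachable u v) : |f u - f v| ≤ G.dist u v := by
  obtain ⟨p, hp⟩ := h.exists_walk_length_eq_dist
  exact hp ▸ p.abs_sub_le_length f hf

lemma abs_sub_le_pathGraph_dist {n : ℕ} (a b : Fin n) :
    |(a : ℤ) - b| ≤ (pathGraph n).dist a b := by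
  refine (pathGraph_preconnected n a b).abs_sub_le_dist (fun x : Fin n ↦ (x : ℤ)) ?_
  intro x y hxy
  rw [pathGraph_adj] at hxy
  rw [abs_le]
  omega

lemma starGraph_dist [DecidableEq V] (r x y : V) :
    (starGraph r).dist x y = if x = y then 0 else if x = r ∨ y = r then 1 else 2 := by
  split_ifs with hxy hr
  · simp [hxy]
  · exact dist_eq_one_iff_adj.2 (starGraph_adj.2 ⟨hxy, hr⟩)
  · have hnadj : ¬(starGraph r).Adj x y := by simp [hr]
    refine le_antisymm ?_ ((connected_starGraph r).one_lt_dist_of_ne_of_not_adj hxy hnadj)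
    push Not at hr
    exact dist_le ((Walk.nil.cons (starGraph_center_adj hr.2.symm)).cons
      (starGraph_center_adj' hr.1.symm))

end SimpleGraph

open SimpleGraph

lemma starGraph_succ_eq (m : ℕ) : _root_.starGraph (m + 1) = SimpleGraph.starGraph 0 := by
  simp only [_root_.starGraph, SimpleGraph.starGraph, Fin.ext_iff, Fin.val_zero]

lemma pathGraph'_eq (n : ℕ) : pathGraph' n = pathGraph n := by
  ext a b
  simp only [pathGraph', fromRel_adj, pathGraph_adj, ne_eq, Fin.ext_iff]
  omega

lemma bookGraph_dist_s12 (m n : ℕ) (k t : Fin (m + 1)) (a b : Fin n) :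
    (bookGraph (m + 1) n).dist (k, a) (t, b) =
      (SimpleGraph.starGraph 0).dist k t + (pathGraph n).dist a b := by
  rw [bookGraph, starGraph_succ_eq, pathGraph'_eq]
  exact Reachable.dist_boxProd (connected_starGraph 0 k t) (pathGraph_preconnected n a b)

def antipodalLabel (n i : ℕ) (p : Fin 3 × Fin n) : ℕ :=
  if (p.2 : ℕ) = i then ![0, 4 * (n / 2) + 3, 2 * (n / 2) + 1] p.1
  else ![3 * (n / 2) + 2, n / 2 + 1, 5 * (n / 2) + 3] p.1

lemma antipodalLabel_le (n i : ℕ) (p : Fin 3 × Fin n) : antipodalLabel n i p ≤ 5 * n / 2 + 3 := by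
  obtain ⟨k, a⟩ := p
  unfold antipodalLabel
  fin_cases k <;> simp only [Fin.reduceFinMk, Matrix.cons_val] <;> split_ifs <;> omega

lemma antipodalLabel_radio_condition {n i : ℕ} (hn : n % 2 = 0) {u v : Fin 3 × Fin n}
    (hu : (u.2 : ℕ) = i ∨ (u.2 : ℕ) = i + n / 2) (hv : (v.2 : ℕ) = i ∨ (v.2 : ℕ) = i + n / 2)
    (huv : u ≠ v) :
    (n : ℤ) + 2 - (bookGraph 3 n).dist u v ≤
      |(antipodalLabel n i u : ℤ) - antipodalLabel n i v| := by
  obtain ⟨k, a⟩ := u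
  obtain ⟨t, b⟩ := v
  have hpath := abs_sub_le_pathGraph_dist a b
  have hab : k = t → (a : ℕ) ≠ b := fun hkt hab ↦ huv (by rw [hkt, Fin.ext hab])
  rw [abs_le] at hpath
  rw [bookGraph_dist_s12 2 n, starGraph_dist, le_abs]
  simp only at hu hv
  unfold antipodalLabel
  fin_cases k <;> fin_cases t <;>
    simp only [Fin.reduceFinMk, Matrix.cons_val, Fin.reduceEq, forall_const, ↓reduceIte,
      or_self] at hab ⊢ <;>
    split_ifs <;> omega

theorem Gi_upper_bound_m_three_general (n : ℕ) (hn : n % 2 = 0) (i : ℕ) :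
    ∃ f : Fin 3 × Fin n → ℕ,
      let S : Finset (Fin 3 × Fin n) :=
        Finset.univ.filter (fun p => (p.2 : ℕ) = i ∨ (p.2 : ℕ) = i + n / 2)
      (∀ u ∈ S, ∀ v ∈ S, u ≠ v →
        (n : ℤ) + 2 - (bookGraph 3 n).dist u v ≤ |(f u : ℤ) - (f v : ℤ)|) ∧
      sSup (f '' ↑S) - sInf (f '' ↑S) ≤ 5 * n / 2 + 3 := by
  refine ⟨antipodalLabel n i, fun u hu v hv huv ↦ ?_, ?_⟩
  · rw [Finset.mem_filter] at hu hv
    exact antipodalLabel_radio_condition hn hu.2 hv.2 huv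
  · refine (Nat.sub_le _ _).trans (csSup_le' ?_)
    rintro _ ⟨p, -, rfl⟩
    exact antipodalLabel_le n i p

theorem Gi_upper_bound_m_three (n : ℕ) (hn : n % 2 = 0) (i : ℕ) (hi : i < n / 2) :
    ∃ f : Fin 3 × Fin n → ℕ,
      let S : Finset (Fin 3 × Fin n) :=
        Finset.univ.filter (fun p => (p.2 : ℕ) = i ∨ (p.2 : ℕ) = i + n / 2)
      (∀ u ∈ S, ∀ v ∈ S, u ≠ v →
        (n : ℤ) + 2 - (bookGraph 3 n).dist u v ≤ |(f u : ℤ) - (f v : ℤ)|) ∧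
      sSup (f '' ↑S) - sInf (f '' ↑S) ≤ 5 * n / 2 + 3 :=
  Gi_upper_bound_m_three_general n hn i
end
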